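/- arXiv:1508.05170 — 2 statements merged into one kernel-verified Lean document; each statement's English description precedes it below -/
import Mathlib

section
/- Let (X_i)_{i=1}^∞ be real-valued random variables, (B_i), (σ_i), (s_i) positive sequences, and C_1, C_2 ≥ 0 constants such that for all i and all τ > 0, P(X_i − B_i > τ) ≤ C_1·exp(−τ²/(2σ_i²)) + C_2·exp(−τ·s_i). Fix σ̄ ≤ σ_1 and s̄ ≥ s_1, and set θ_i = max{ (σ_i/B_i)·√(2·log(σ_i/σ̄) + 4·log i), (B_i·s_i)^{-1}·log(i²·s̄/s_i) } + 1. Then E[ sup_i (X_i − B_i·θ_i) ] ≤ 3·C_1·σ̄ + 2·C_2/s̄. -/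
/-!
Put `a i = B i * (θ i - 1) ≥ 0`, so that `X i - B i * θ i = (X i - B i) - a i`. The two branches of
the maximum defining `θ i` give `exp (-a²/(2σ²)) ≤ σbar/(σ i²)` and `exp (-a s) ≤ s/(sbar i²)`, and
since `(a + t)² ≥ a² + t²`, the tail of `X i - B i * θ i` at `t > 0` is dominated by
`(C1 σbar/σ · exp (-t²/(2σ²)) + C2 s/sbar · exp (-s t)) / i²`. Integrating over `t > 0` bounds each
integrated tail by `(3/2 · C1 σbar + C2/sbar) / i²`; a union bound inside the layer-cake formula for
the positive part of the supremum, together with `∑ 1/i² = π²/6 ≤ 2`, gives the claim.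
-/

open MeasureTheory Real Set

section TailIntegral

variable {Ω : Type*} [MeasurableSpace Ω] (μ : Measure Ω)

theorem integral_le_of_lintegral_meas_lt_le {f : Ω → ℝ} {M : ℝ} (hM : 0 ≤ M)
    (h : ∫⁻ t in Ioi 0, μ {ω | t < f ω} ≤ ENNReal.ofReal M) : ∫ ω, f ω ∂μ ≤ M := by
  by_cases hf : Integrable f μ
  swap
  · rwa [integral_undef hf]
  have hpos : Integrable (fun ω => max (f ω) 0) μ := hf.pos_part
  have hlevel : ∫⁻ t in Ioi 0, μ {ω | t < max (f ω) 0} = ∫⁻ t in Ioi 0, μ {ω | t < f ω} := by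
    refine setLIntegral_congr_fun measurableSet_Ioi fun t (ht : 0 < t) => ?_
    simp only [lt_max_iff, ht.not_gt, or_false]
  calc ∫ ω, f ω ∂μ ≤ ∫ ω, max (f ω) 0 ∂μ := integral_mono hf hpos fun ω => le_max_left _ _
    _ = (∫⁻ ω, ENNReal.ofReal (max (f ω) 0) ∂μ).toReal :=
      integral_eq_lintegral_of_nonneg_ae (ae_of_all μ fun ω => le_max_right _ _)
        hpos.aestronglyMeasurable
    _ ≤ M := by
      rw [lintegral_eq_lintegral_meas_lt μ (f := fun ω => max (f ω) 0)
        (ae_of_all μ fun ω => le_max_right _ _) hpos.aemeasurable, hlevel]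
      exact ENNReal.toReal_le_of_le_ofReal hM h

theorem lintegral_meas_lt_iSup_le {ι : Type*} [Countable ι] [Nonempty ι] (Y : ι → Ω → ℝ) :
    ∫⁻ t in Ioi 0, μ {ω | t < ⨆ i, Y i ω}
      ≤ ∑' i, ∫⁻ t in Ioi 0, μ {ω | t < Y i ω} := by
  have hunion : ∀ t, {ω | t < ⨆ i, Y i ω} ⊆ ⋃ i, {ω | t < Y i ω} := fun t ω hω =>
    mem_iUnion.2 (exists_lt_of_lt_ciSup (f := fun i => Y i ω) hω)
  have hmeas : ∀ i, Measurable fun t => μ {ω | t < Y i ω} := fun i =>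
    Antitone.measurable fun t t' htt' => measure_mono fun ω (hω : t' < Y i ω) => htt'.trans_lt hω
  calc ∫⁻ t in Ioi 0, μ {ω | t < ⨆ i, Y i ω}
      ≤ ∫⁻ t in Ioi 0, ∑' i, μ {ω | t < Y i ω} :=
        lintegral_mono fun t => (measure_mono (hunion t)).trans (measure_iUnion_le _)
    _ = ∑' i, ∫⁻ t in Ioi 0, μ {ω | t < Y i ω} :=
        lintegral_tsum fun i => (hmeas i).aemeasurable

end TailIntegral

theorem integral_exp_neg_sq_div_Ioi_le {σ : ℝ} (hσ : 0 < σ) :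
    ∫ t in Ioi (0 : ℝ), exp (-(t ^ 2) / (2 * σ ^ 2)) ≤ 3 / 2 * σ := by
  have hform : ∀ t : ℝ, -(t ^ 2) / (2 * σ ^ 2) = -(2 * σ ^ 2)⁻¹ * t ^ 2 := fun t => by ring
  simp_rw [hform]
  -- the integral is `σ √(π / 2)`, and `π / 2 ≤ (3 / 2) ^ 2`
  rw [integral_gaussian_Ioi, div_inv_eq_mul]
  have hsqrt := sqrt_le_sqrt (by nlinarith [pi_lt_d2] : π * (2 * σ ^ 2) ≤ (3 * σ) ^ 2)
  rw [sqrt_sq (by positivity)] at hsqrt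
  linarith

theorem integral_exp_neg_mul_Ioi {s : ℝ} (hs : 0 < s) :
    ∫ t in Ioi (0 : ℝ), exp (-(t * s)) = s⁻¹ := by
  have h := integral_exp_mul_Ioi (neg_neg_of_pos hs) 0
  simp only [mul_zero, exp_zero, neg_div_neg_eq, one_div, neg_mul] at h
  simpa only [mul_comm _ s] using h

theorem exp_neg_sq_div_le_inv {σ a L : ℝ} (hσ : 0 < σ) (hL : 0 < L)
    (h : σ * √(2 * log L) ≤ a) : exp (-(a ^ 2) / (2 * σ ^ 2)) ≤ L⁻¹ := by
  rcases le_or_gt 0 (log L) with hlog | hlog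
  · have hsq : σ ^ 2 * (2 * log L) ≤ a ^ 2 := by
      have := pow_le_pow_left₀ (by positivity) h 2
      rwa [mul_pow, sq_sqrt (by positivity)] at this
    calc exp (-(a ^ 2) / (2 * σ ^ 2)) ≤ exp (-log L) := by
          gcongr
          rw [div_le_iff₀ (by positivity)]
          linarith
      _ = L⁻¹ := by rw [exp_neg, exp_log hL]
  · have hL1 : L < 1 := (log_neg_iff hL).1 hlog
    calc exp (-(a ^ 2) / (2 * σ ^ 2)) ≤ 1 := exp_le_one_iff.2 (by
          apply div_nonpos_of_nonpos_of_nonneg <;> nlinarith)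
      _ ≤ L⁻¹ := (one_le_inv₀ hL).2 hL1.le

theorem exp_neg_sq_div_le_of_le {B σ σbar x m : ℝ} (hB : 0 < B) (hσ : 0 < σ) (hσbar : 0 < σbar)
    (hx : 0 < x) (hm : σ / B * √(2 * log (σ / σbar) + 4 * log x) ≤ m) :
    exp (-((B * m) ^ 2) / (2 * σ ^ 2)) ≤ σbar / (σ * x ^ 2) := by
  have hlog : 2 * log (σ * x ^ 2 / σbar) = 2 * log (σ / σbar) + 4 * log x := by
    rw [mul_div_right_comm, log_mul (by positivity) (by positivity), log_pow]
    push_cast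
    ring
  have h := exp_neg_sq_div_le_inv (a := B * m) hσ (by positivity : 0 < σ * x ^ 2 / σbar) (by
    rw [hlog]
    calc σ * √(2 * log (σ / σbar) + 4 * log x)
        = B * (σ / B * √(2 * log (σ / σbar) + 4 * log x)) := by field_simp
      _ ≤ B * m := by gcongr)
  rwa [inv_div] at h

theorem exp_neg_mul_le_of_le {B s sbar x m : ℝ} (hB : 0 < B) (hs : 0 < s) (hsbar : 0 < sbar)
    (hx : 0 < x) (hm : (B * s)⁻¹ * log (x ^ 2 * (sbar / s)) ≤ m) :
    exp (-(B * m * s)) ≤ s / (sbar * x ^ 2) := by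
  have hlog : log (x ^ 2 * (sbar / s)) ≤ B * m * s := by
    rw [inv_mul_le_iff₀ (by positivity)] at hm
    linarith
  calc exp (-(B * m * s)) ≤ exp (-log (x ^ 2 * (sbar / s))) := by gcongr
    _ = s / (sbar * x ^ 2) := by
      rw [exp_neg, exp_log (by positivity)]
      field_simp

section TailShift

variable {Ω : Type*} [MeasurableSpace Ω] (μ : Measure Ω) [IsFiniteMeasure μ]

theorem meas_lt_sub_le_of_tail {Y : Ω → ℝ} {C1 C2 σ s a t : ℝ} (hC1 : 0 ≤ C1) (hC2 : 0 ≤ C2)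
    (ha : 0 ≤ a) (ht : 0 < t)
    (htail : ∀ τ > (0 : ℝ), (μ {ω | Y ω > τ}).toReal
      ≤ C1 * exp (-(τ ^ 2) / (2 * σ ^ 2)) + C2 * exp (-(τ * s))) :
    μ {ω | t < Y ω - a} ≤ ENNReal.ofReal
      (C1 * exp (-(a ^ 2) / (2 * σ ^ 2)) * exp (-(t ^ 2) / (2 * σ ^ 2))
        + C2 * exp (-(a * s)) * exp (-(t * s))) := by
  have hset : {ω | t < Y ω - a} = {ω | Y ω > a + t} := by
    ext ω
    simp only [mem_ofPred_eq, lt_sub_iff_add_lt', gt_iff_lt]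
  rw [hset, ← ENNReal.ofReal_toReal (measure_ne_top μ _)]
  refine ENNReal.ofReal_le_ofReal ((htail _ (by positivity)).trans ?_)
  simp only [mul_assoc, ← exp_add]
  gcongr ?_ + C2 * exp ?_
  · rw [← add_div]
    gcongr
    nlinarith
  · linarith

theorem lintegral_meas_lt_sub_le_of_tail {Y : Ω → ℝ} {C1 C2 σ s a : ℝ} (hC1 : 0 ≤ C1)
    (hC2 : 0 ≤ C2) (hσ : 0 < σ) (hs : 0 < s) (ha : 0 ≤ a)
    (htail : ∀ τ > (0 : ℝ), (μ {ω | Y ω > τ}).toReal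
      ≤ C1 * exp (-(τ ^ 2) / (2 * σ ^ 2)) + C2 * exp (-(τ * s))) :
    ∫⁻ t in Ioi 0, μ {ω | t < Y ω - a} ≤ ENNReal.ofReal
      (C1 * exp (-(a ^ 2) / (2 * σ ^ 2)) * (3 / 2 * σ) + C2 * exp (-(a * s)) * s⁻¹) := by
  set c1 := C1 * exp (-(a ^ 2) / (2 * σ ^ 2))
  set c2 := C2 * exp (-(a * s))
  have hgauss : IntegrableOn (fun t : ℝ => exp (-(t ^ 2) / (2 * σ ^ 2))) (Ioi 0) := by
    have hform : ∀ t : ℝ, -(t ^ 2) / (2 * σ ^ 2) = -(2 * σ ^ 2)⁻¹ * t ^ 2 := fun t => by ring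
    simp_rw [hform]
    exact (integrable_exp_neg_mul_sq (by positivity)).integrableOn
  have hexp : IntegrableOn (fun t : ℝ => exp (-(t * s))) (Ioi 0) := by
    simpa only [neg_mul, mul_comm s] using exp_neg_integrableOn_Ioi 0 hs
  have hint : IntegrableOn (fun t => c1 * exp (-(t ^ 2) / (2 * σ ^ 2)) + c2 * exp (-(t * s)))
      (Ioi 0) := (hgauss.const_mul c1).add (hexp.const_mul c2)
  calc ∫⁻ t in Ioi 0, μ {ω | t < Y ω - a}
      ≤ ∫⁻ t in Ioi 0, ENNReal.ofReal
          (c1 * exp (-(t ^ 2) / (2 * σ ^ 2)) + c2 * exp (-(t * s))) :=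
        setLIntegral_mono_ae' measurableSet_Ioi (ae_of_all _ fun t (ht : 0 < t) =>
          meas_lt_sub_le_of_tail μ hC1 hC2 ha ht htail)
    _ = ENNReal.ofReal
          (∫ t in Ioi 0, c1 * exp (-(t ^ 2) / (2 * σ ^ 2)) + c2 * exp (-(t * s))) :=
        (ofReal_integral_eq_lintegral_ofReal hint (ae_of_all _ fun t => by positivity)).symm
    _ ≤ ENNReal.ofReal (c1 * (3 / 2 * σ) + c2 * s⁻¹) := by
      rw [integral_add (hgauss.const_mul c1) (hexp.const_mul c2), integral_const_mul,
        integral_const_mul, integral_exp_neg_mul_Ioi hs]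
      gcongr
      exact integral_exp_neg_sq_div_Ioi_le hσ

theorem lintegral_meas_lt_sub_le_div_sq {Y : Ω → ℝ} {C1 C2 B σ s σbar sbar x m : ℝ}
    (hC1 : 0 ≤ C1) (hC2 : 0 ≤ C2) (hB : 0 < B) (hσ : 0 < σ) (hs : 0 < s) (hσbar : 0 < σbar)
    (hsbar : 0 < sbar) (hx : 0 < x)
    (htail : ∀ τ > (0 : ℝ), (μ {ω | Y ω > τ}).toReal
      ≤ C1 * exp (-(τ ^ 2) / (2 * σ ^ 2)) + C2 * exp (-(τ * s)))
    (hm₁ : σ / B * √(2 * log (σ / σbar) + 4 * log x) ≤ m)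
    (hm₂ : (B * s)⁻¹ * log (x ^ 2 * (sbar / s)) ≤ m) :
    ∫⁻ t in Ioi 0, μ {ω | t < Y ω - B * m}
      ≤ ENNReal.ofReal ((3 / 2 * C1 * σbar + C2 / sbar) / x ^ 2) := by
  have hm : 0 ≤ m := le_trans (by positivity) hm₁
  refine (lintegral_meas_lt_sub_le_of_tail μ hC1 hC2 hσ hs (by positivity) htail).trans
    (ENNReal.ofReal_le_ofReal ?_)
  calc C1 * exp (-((B * m) ^ 2) / (2 * σ ^ 2)) * (3 / 2 * σ) + C2 * exp (-(B * m * s)) * s⁻¹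
      ≤ C1 * (σbar / (σ * x ^ 2)) * (3 / 2 * σ) + C2 * (s / (sbar * x ^ 2)) * s⁻¹ := by
        gcongr
        exacts [exp_neg_sq_div_le_of_le hB hσ hσbar hx hm₁,
          exp_neg_mul_le_of_le hB hs hsbar hx hm₂]
    _ = (3 / 2 * C1 * σbar + C2 / sbar) / x ^ 2 := by
      field_simp

end TailShift

theorem tsum_ofReal_div_sq_le {D : ℝ} (hD : 0 ≤ D) :
    ∑' i : {j : ℕ // 1 ≤ j}, ENNReal.ofReal (D / (i : ℝ) ^ 2) ≤ ENNReal.ofReal (2 * D) := by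
  have hzeta : HasSum (fun n : ℕ => D / (n : ℝ) ^ 2) (D * (π ^ 2 / 6)) := by
    simpa only [mul_one_div] using hasSum_zeta_two.mul_left D
  calc ∑' i : {j : ℕ // 1 ≤ j}, ENNReal.ofReal (D / (i : ℝ) ^ 2)
      ≤ ∑' n : ℕ, ENNReal.ofReal (D / (n : ℝ) ^ 2) :=
        ENNReal.tsum_comp_le_tsum_of_injective Subtype.val_injective _
    _ = ENNReal.ofReal (D * (π ^ 2 / 6)) := by
      rw [← ENNReal.ofReal_tsum_of_nonneg (fun n => by positivity) hzeta.summable, hzeta.tsum_eq]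
    _ ≤ ENNReal.ofReal (2 * D) := by
      have hπ : π ^ 2 / 6 ≤ 2 := by nlinarith [pi_lt_d2, pi_pos]
      exact ENNReal.ofReal_le_ofReal (by nlinarith [mul_le_mul_of_nonneg_left hπ hD])

theorem stmt0_general {Ω : Type*} [MeasurableSpace Ω] (ℙ : Measure Ω) [IsProbabilityMeasure ℙ]
    (X : ℕ → Ω → ℝ) (B σ s θ : ℕ → ℝ) (C1 C2 σbar sbar : ℝ)
    (hC1 : 0 ≤ C1) (hC2 : 0 ≤ C2)
    (hB : ∀ i, 1 ≤ i → 0 < B i) (hσ : ∀ i, 1 ≤ i → 0 < σ i) (hs : ∀ i, 1 ≤ i → 0 < s i)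
    (hσbar : 0 < σbar) (hsbar : sbar ≥ s 1)
    (htail : ∀ i, 1 ≤ i → ∀ τ > (0:ℝ),
      (ℙ {ω | X i ω - B i > τ}).toReal
        ≤ C1 * exp (-(τ ^ 2) / (2 * (σ i) ^ 2)) + C2 * exp (-(τ * s i)))
    (hθ : ∀ i, 1 ≤ i → θ i =
      max ((σ i / B i) * Real.sqrt (2 * Real.log (σ i / σbar) + 4 * Real.log i))
          ((B i * s i)⁻¹ * Real.log ((i : ℝ) ^ 2 * (sbar / s i))) + 1) :
    ∫ ω, (⨆ i : {j : ℕ // 1 ≤ j}, (X i.1 ω - B i.1 * θ i.1)) ∂ℙ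
      ≤ 3 * C1 * σbar + 2 * C2 / sbar := by
  have hsbar0 : 0 < sbar := (hs 1 le_rfl).trans_le hsbar
  have : Nonempty {j : ℕ // 1 ≤ j} := ⟨⟨1, le_rfl⟩⟩
  refine integral_le_of_lintegral_meas_lt_le ℙ (by positivity)
    ((lintegral_meas_lt_iSup_le ℙ _).trans ?_)
  calc ∑' i : {j : ℕ // 1 ≤ j}, ∫⁻ t in Ioi 0, ℙ {ω | t < X i.1 ω - B i.1 * θ i.1}
      ≤ ∑' i : {j : ℕ // 1 ≤ j},
          ENNReal.ofReal ((3 / 2 * C1 * σbar + C2 / sbar) / (i : ℝ) ^ 2) := by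
        refine ENNReal.tsum_le_tsum fun ⟨i, hi⟩ => ?_
        have hshift : ∀ ω, X i ω - B i * θ i = X i ω - B i - B i *
            max ((σ i / B i) * √(2 * log (σ i / σbar) + 4 * log i))
              ((B i * s i)⁻¹ * log ((i : ℝ) ^ 2 * (sbar / s i))) := fun ω => by
          rw [hθ i hi]
          ring
        simp only [hshift]
        exact lintegral_meas_lt_sub_le_div_sq ℙ hC1 hC2 (hB i hi) (hσ i hi) (hs i hi) hσbar
          hsbar0 (by exact_mod_cast hi) (htail i hi) (le_max_left _ _) (le_max_right _ _)
    _ ≤ ENNReal.ofReal (2 * (3 / 2 * C1 * σbar + C2 / sbar)) := tsum_ofReal_div_sq_le (by positivity)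
    _ = ENNReal.ofReal (3 * C1 * σbar + 2 * C2 / sbar) := by ring_nf

/-- Maximal inequality for a sequence of random variables with mixed
subgaussian/subexponential one-sided tails. -/
theorem stmt0 {Ω : Type*} [MeasurableSpace Ω] (ℙ : Measure Ω) [IsProbabilityMeasure ℙ]
    (X : ℕ → Ω → ℝ) (B σ s θ : ℕ → ℝ) (C1 C2 σbar sbar : ℝ)
    (hC1 : 0 ≤ C1) (hC2 : 0 ≤ C2)
    (hB : ∀ i, 1 ≤ i → 0 < B i) (hσ : ∀ i, 1 ≤ i → 0 < σ i) (hs : ∀ i, 1 ≤ i → 0 < s i)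
    (hσbar : 0 < σbar) (hσbar1 : σbar ≤ σ 1) (hsbar : sbar ≥ s 1)
    (htail : ∀ i, 1 ≤ i → ∀ τ > (0:ℝ),
      (ℙ {ω | X i ω - B i > τ}).toReal
        ≤ C1 * exp (-(τ ^ 2) / (2 * (σ i) ^ 2)) + C2 * exp (-(τ * s i)))
    (hθ : ∀ i, 1 ≤ i → θ i =
      max ((σ i / B i) * Real.sqrt (2 * Real.log (σ i / σbar) + 4 * Real.log i))
          ((B i * s i)⁻¹ * Real.log ((i : ℝ) ^ 2 * (sbar / s i))) + 1) :
    ∫ ω, (⨆ i : {j : ℕ // 1 ≤ j}, (X i.1 ω - B i.1 * θ i.1)) ∂ℙ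
      ≤ 3 * C1 * σbar + 2 * C2 / sbar :=
  stmt0_general ℙ X B σ s θ C1 C2 σbar sbar hC1 hC2 hB hσ hs hσbar hsbar htail hθ
end

section
/- Pinelis-type deviation for 2-smooth Banach spaces: let H be a separable (2,D)-smooth Banach space, z_1,…,z_n a predictable process with respect to the filtration generated by i.i.d. Rademacher variables ε_1,…,ε_n (i.e., z_t depends only on ε_1,…,ε_{t−1}), with ‖z_t‖ ≤ 1 always. Then for any τ with n > τ/(4D²), P( ‖Σ_t ε_t z_t‖ ≥ τ ) ≤ 2·exp( −τ²/(8D²n) ). As a corollary in a Hilbert space (D = 1): P(‖Σ_t ε_t z_t‖ ≥ τ) ≤ 2 exp(−τ²/(8n)) for n > τ/4. -/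
/-!
Write `S(σ) = ∑ₜ σₜ zₜ(σ₁, …, σₜ₋₁)` for a sign sequence `σ`. By the (2,D)-smoothness inequality
and the elementary bound `cosh √(a² + b²) ≤ cosh a · exp (b² / 2)` (compare power series),
`cosh (λ‖x + y‖) + cosh (λ‖x - y‖) ≤ 2 exp (λ²D²) cosh (λ‖x‖)` whenever `‖y‖ ≤ 1`. Summing out
the last sign of the predictable tree and inducting gives `∑_σ cosh (λ‖S(σ)‖) ≤ (2 exp (λ²D²))ⁿ`,
so Markov's inequality bounds the proportion of sign sequences with `‖S(σ)‖ ≥ τ` by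
`2 exp (nλ²D² - λτ)`; `λ = τ / (2D²n)` gives `2 exp (-τ² / (4D²n))`. Almost surely the
Rademacher vector `ε` is a sign sequence, each of which has probability `2⁻ⁿ`, and `z` is a
predictable function of `ε`, so the same bound holds for the probability.
-/

open Real Finset MeasureTheory ProbabilityTheory
open scoped Nat

namespace Nat

theorem choose_le_choose_two_mul {m k : ℕ} (h : k ≤ m) : m.choose k ≤ (2 * m).choose (2 * k) := by
  have hsq : m.choose k * m.choose k ≤ (m + m).choose (k + k) := by
    rw [add_choose_eq]
    exact Finset.single_le_sum (f := fun ij : ℕ × ℕ => m.choose ij.1 * m.choose ij.2)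
      (fun _ _ => Nat.zero_le _) (a := (k, k)) (by simp)
  calc m.choose k ≤ m.choose k * m.choose k := Nat.le_mul_of_pos_right _ (Nat.choose_pos h)
    _ ≤ (2 * m).choose (2 * k) := by simpa [two_mul] using hsq

theorem choose_mul_factorial_two_mul_le {m k : ℕ} (h : k ≤ m) :
    m.choose k * (2 * k)! * (2 * (m - k))! ≤ (2 * m)! := by
  calc m.choose k * (2 * k)! * (2 * (m - k))!
      ≤ (2 * m).choose (2 * k) * (2 * k)! * (2 * m - 2 * k)! := by
        rw [Nat.mul_sub]; gcongr; exact choose_le_choose_two_mul h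
    _ = (2 * m)! := Nat.choose_mul_factorial_mul_factorial (by omega)

end Nat

namespace Real

theorem hasSum_cosh_sqrt {u : ℝ} (hu : 0 ≤ u) :
    HasSum (fun m : ℕ => u ^ m / (2 * m)!) (cosh √u) := by
  simpa only [pow_mul, sq_sqrt hu] using hasSum_cosh √u

theorem cosh_sqrt_add_le {u v : ℝ} (hu : 0 ≤ u) (hv : 0 ≤ v) :
    cosh √(u + v) ≤ cosh √u * cosh √v := by
  have hsu := hasSum_cosh_sqrt hu
  have hsv := hasSum_cosh_sqrt hv
  have hprod := hasSum_sum_range_mul_of_summable_norm hsu.summable.norm hsv.summable.norm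
  rw [hsu.tsum_eq, hsv.tsum_eq] at hprod
  refine hasSum_le (fun m => ?_) (hasSum_cosh_sqrt (add_nonneg hu hv)) hprod
  rw [add_pow, Finset.sum_div]
  refine Finset.sum_le_sum fun k hk => ?_
  have hkm : k ≤ m := Nat.lt_succ_iff.mp (Finset.mem_range.mp hk)
  have hfac : (m.choose k : ℝ) * (2 * k)! * (2 * (m - k))! ≤ (2 * m)! := by
    exact_mod_cast Nat.choose_mul_factorial_two_mul_le hkm
  rw [div_mul_div_comm, div_le_div_iff₀ (by positivity) (by positivity)]
  calc u ^ k * v ^ (m - k) * m.choose k * ((2 * k)! * (2 * (m - k))!)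
      = u ^ k * v ^ (m - k) * (m.choose k * (2 * k)! * (2 * (m - k))!) := by ring
    _ ≤ u ^ k * v ^ (m - k) * (2 * m)! := by gcongr

theorem cosh_le_cosh_mul_exp_half_sq {m c d : ℝ} (h : m ^ 2 ≤ c ^ 2 + d ^ 2) :
    cosh m ≤ cosh c * exp (d ^ 2 / 2) :=
  calc cosh m ≤ cosh √(c ^ 2 + d ^ 2) := by
        rw [cosh_le_cosh, abs_of_nonneg (sqrt_nonneg _)]
        exact abs_le_sqrt h
    _ ≤ cosh √(c ^ 2) * cosh √(d ^ 2) := cosh_sqrt_add_le (sq_nonneg c) (sq_nonneg d)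
    _ = cosh c * cosh d := by rw [sqrt_sq_eq_abs, sqrt_sq_eq_abs, cosh_abs, cosh_abs]
    _ ≤ cosh c * exp (d ^ 2 / 2) := by gcongr; exact cosh_le_exp_half_sq d

theorem cosh_add_cosh (p q : ℝ) :
    cosh p + cosh q = 2 * cosh ((p + q) / 2) * cosh ((p - q) / 2) := by
  have h₁ := cosh_add ((p + q) / 2) ((p - q) / 2)
  have h₂ := cosh_sub ((p + q) / 2) ((p - q) / 2)
  rw [show (p + q) / 2 + (p - q) / 2 = p by ring] at h₁
  rw [show (p + q) / 2 - (p - q) / 2 = q by ring] at h₂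
  linarith

end Real

theorem cosh_mul_norm_add_add_cosh_mul_norm_sub_le {H : Type*} [SeminormedAddCommGroup H] {D : ℝ}
    (hsmooth : ∀ x y : H, ‖x + y‖ ^ 2 + ‖x - y‖ ^ 2 ≤ 2 * ‖x‖ ^ 2 + 2 * D ^ 2 * ‖y‖ ^ 2)
    (l : ℝ) (x : H) {y : H} (hy : ‖y‖ ≤ 1) :
    cosh (l * ‖x + y‖) + cosh (l * ‖x - y‖) ≤ 2 * exp (l ^ 2 * D ^ 2) * cosh (l * ‖x‖) := by
  set a := ‖x + y‖
  set b := ‖x - y‖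
  have hy_sq : ‖y‖ ^ 2 ≤ 1 := pow_le_one₀ (norm_nonneg y) hy
  -- smoothness at `x = 0` gives `‖y‖ ≤ |D| ‖y‖`
  have hyD : ‖y‖ ^ 2 ≤ D ^ 2 := by
    have h0 := hsmooth 0 y
    simp only [zero_add, zero_sub, norm_neg, norm_zero] at h0
    nlinarith [sq_nonneg D]
  have hab : |a - b| ≤ 2 * ‖y‖ := by
    calc |a - b| ≤ ‖(x + y) - (x - y)‖ := abs_norm_sub_norm_le _ _
      _ = ‖y + y‖ := by congr 1; abel
      _ ≤ 2 * ‖y‖ := by rw [two_mul]; exact norm_add_le y y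
  have hmean : ((a + b) / 2) ^ 2 ≤ ‖x‖ ^ 2 + D ^ 2 := by
    nlinarith [hsmooth x y, sq_nonneg (a - b), sq_nonneg D]
  have hdiff : ((a - b) / 2) ^ 2 ≤ D ^ 2 := by
    rw [div_pow, ← sq_abs]
    nlinarith [abs_nonneg (a - b), norm_nonneg y]
  have h₁ : cosh (l * ((a + b) / 2)) ≤ cosh (l * ‖x‖) * exp ((l * D) ^ 2 / 2) :=
    Real.cosh_le_cosh_mul_exp_half_sq <| by
      rw [mul_pow, mul_pow, mul_pow, ← mul_add]; exact mul_le_mul_of_nonneg_left hmean (sq_nonneg l)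
  have h₂ : cosh (l * ((a - b) / 2)) ≤ exp ((l * D) ^ 2 / 2) := by
    simpa using Real.cosh_le_cosh_mul_exp_half_sq (c := 0) <| by
      rw [mul_pow, mul_pow, zero_pow two_ne_zero, zero_add]
      exact mul_le_mul_of_nonneg_left hdiff (sq_nonneg l)
  calc cosh (l * a) + cosh (l * b) = 2 * cosh (l * ((a + b) / 2)) * cosh (l * ((a - b) / 2)) := by
        rw [Real.cosh_add_cosh]; ring_nf
    _ ≤ 2 * (cosh (l * ‖x‖) * exp ((l * D) ^ 2 / 2)) * exp ((l * D) ^ 2 / 2) := by gcongr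
    _ = 2 * exp (l ^ 2 * D ^ 2) * cosh (l * ‖x‖) := by
        rw [mul_assoc, mul_assoc, ← Real.exp_add]; ring_nf

def IsPredictableTree {n : ℕ} {α β : Type*} (w : (Fin n → α) → Fin n → β) : Prop :=
  ∀ t σ σ', (∀ s < t, σ s = σ' s) → w σ t = w σ' t

namespace IsPredictableTree

variable {n : ℕ} {α β : Type*}

theorem comp {γ : Type*} {w : (Fin n → α) → Fin n → β} (hw : IsPredictableTree w) (f : γ → α) :
    IsPredictableTree fun σ => w (f ∘ σ) :=
  fun t _ _ h => hw t _ _ fun s hs => congrArg f (h s hs)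

theorem snoc_eq {w : (Fin (n + 1) → α) → Fin (n + 1) → β} (hw : IsPredictableTree w)
    (τ : Fin n → α) (a b : α) (t : Fin (n + 1)) :
    w (Fin.snoc τ a) t = w (Fin.snoc τ b) t := by
  refine hw t _ _ fun s hs => ?_
  obtain ⟨s, rfl⟩ := Fin.exists_castSucc_eq.mpr (ne_of_lt (lt_of_lt_of_le hs (Fin.le_last t)))
  simp

theorem init {w : (Fin (n + 1) → α) → Fin (n + 1) → β} (hw : IsPredictableTree w) (a : α) :
    IsPredictableTree fun τ t => w (Fin.snoc τ a) t.castSucc := by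
  refine fun t σ σ' h => hw _ _ _ fun s hs => ?_
  obtain ⟨s, rfl⟩ := Fin.exists_castSucc_eq.mpr (ne_of_lt (lt_of_lt_of_le hs (Fin.le_last _)))
  simpa using h s (Fin.castSucc_lt_castSucc_iff.mp hs)

end IsPredictableTree

def Bool.toSign (b : Bool) : ℝ := if b then 1 else -1

theorem sum_apply_sum_toSign_smul_le {H : Type*} [AddCommGroup H] [Module ℝ H] {Y : Set H}
    {Φ : H → ℝ} {K : ℝ} (hK : 0 ≤ K) (hΦ : ∀ x, ∀ y ∈ Y, Φ (x + y) + Φ (x - y) ≤ 2 * K * Φ x) :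
    ∀ {n : ℕ} (w : (Fin n → Bool) → Fin n → H), IsPredictableTree w → (∀ σ t, w σ t ∈ Y) →
      ∑ σ, Φ (∑ t, (σ t).toSign • w σ t) ≤ (2 * K) ^ n * Φ 0
  | 0, w, _, _ => by simp
  | n + 1, w, hw, hwY => by
    set w' : (Fin n → Bool) → Fin n → H := fun τ t => w (Fin.snoc τ false) t.castSucc
    set y : (Fin n → Bool) → H := fun τ => w (Fin.snoc τ false) (Fin.last n)
    have hsplit : ∀ τ b, ∑ t, (Fin.snoc τ b t : Bool).toSign • w (Fin.snoc τ b) t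
        = ∑ t, (τ t).toSign • w' τ t + b.toSign • y τ := by
      intro τ b
      simp only [Fin.sum_univ_castSucc, Fin.snoc_castSucc, Fin.snoc_last, w', y,
        hw.snoc_eq τ b false]
    calc ∑ σ, Φ (∑ t, (σ t).toSign • w σ t)
        = ∑ τ, ∑ b, Φ (∑ t, (Fin.snoc τ b t : Bool).toSign • w (Fin.snoc τ b) t) := by
          rw [← (Fin.snocEquiv fun _ => Bool).sum_comp, Fintype.sum_prod_type_right]
          rfl
      _ = ∑ τ, (Φ (∑ t, (τ t).toSign • w' τ t + y τ) + Φ (∑ t, (τ t).toSign • w' τ t - y τ)) := by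
          refine sum_congr rfl fun τ _ => ?_
          rw [Fintype.sum_bool, hsplit, hsplit]
          simp [Bool.toSign, sub_eq_add_neg]
      _ ≤ ∑ τ, 2 * K * Φ (∑ t, (τ t).toSign • w' τ t) :=
          sum_le_sum fun τ _ => hΦ _ _ (hwY _ _)
      _ = 2 * K * ∑ τ, Φ (∑ t, (τ t).toSign • w' τ t) := (mul_sum ..).symm
      _ ≤ 2 * K * ((2 * K) ^ n * Φ 0) := by
          gcongr
          exact sum_apply_sum_toSign_smul_le hK hΦ w' (hw.init false) fun τ t => hwY _ _
      _ = (2 * K) ^ (n + 1) * Φ 0 := by ring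

theorem exists_isPredictableTree_apply_eq {Ω α β : Type*} {n : ℕ} (ε : Fin n → Ω → α)
    (z : Fin n → Ω → β)
    (hpred : ∀ t : Fin n, ∀ ω ω' : Ω, (∀ s : Fin n, s < t → ε s ω = ε s ω') → z t ω = z t ω')
    {Y : Set β} (hY : Y.Nonempty) (hzY : ∀ t ω, z t ω ∈ Y) :
    ∃ w : (Fin n → α) → Fin n → β, IsPredictableTree w ∧ (∀ σ t, w σ t ∈ Y) ∧
      ∀ ω t, w (fun s => ε s ω) t = z t ω := by
  classical
  let w : (Fin n → α) → Fin n → β := fun σ t =>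
    if h : ∃ ω, ∀ s < t, ε s ω = σ s then z t h.choose else hY.some
  refine ⟨w, fun t σ σ' hσ => ?_, fun σ t => ?_, fun ω t => ?_⟩
  · have hiff : (∃ ω, ∀ s < t, ε s ω = σ s) ↔ ∃ ω, ∀ s < t, ε s ω = σ' s := by
      refine exists_congr fun ω => forall₂_congr fun s hs => ?_
      rw [hσ s hs]
    by_cases h : ∃ ω, ∀ s < t, ε s ω = σ s
    · simp only [w, dif_pos h, dif_pos (hiff.mp h)]
      exact hpred t _ _ fun s hs => by
        rw [h.choose_spec s hs, (hiff.mp h).choose_spec s hs, hσ s hs]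
    · simp only [w, dif_neg h, dif_neg (mt hiff.mpr h)]
  · simp only [w]
    split_ifs
    exacts [hzY _ _, hY.some_mem]
  · have h : ∃ ω', ∀ s < t, ε s ω' = ε s ω := ⟨ω, fun _ _ => rfl⟩
    simp only [w, dif_pos h]
    exact hpred t _ _ h.choose_spec

section Rademacher

variable {Ω : Type*} [MeasurableSpace Ω] {μ : Measure Ω}

theorem ae_eq_one_or_eq_neg_one [IsProbabilityMeasure μ] {X : Ω → ℝ} (hX : Measurable X)
    (hlaw : μ {ω | X ω = 1} = 1 / 2 ∧ μ {ω | X ω = -1} = 1 / 2) :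
    ∀ᵐ ω ∂μ, X ω = 1 ∨ X ω = -1 := by
  have hm₁ : MeasurableSet {ω | X ω = 1} := hX (measurableSet_singleton 1)
  have hm₂ : MeasurableSet {ω | X ω = -1} := hX (measurableSet_singleton (-1))
  have hdisj : Disjoint {ω | X ω = 1} {ω | X ω = -1} :=
    Set.disjoint_left.mpr fun ω (h₁ : X ω = 1) (h₂ : X ω = -1) => by norm_num [h₁] at h₂
  have hfull : μ ({ω | X ω = 1} ∪ {ω | X ω = -1}) = μ Set.univ := by
    rw [measure_union hdisj hm₂, hlaw.1, hlaw.2, ENNReal.add_halves, measure_univ]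
  exact (ae_iff_measure_eq (hm₁.union hm₂).nullMeasurableSet).mpr hfull

variable {n : ℕ} {ε : Fin n → Ω → ℝ}

theorem measure_forall_eq_toSign (hindep : iIndepFun ε μ)
    (hlaw : ∀ t, μ {ω | ε t ω = 1} = 1 / 2 ∧ μ {ω | ε t ω = -1} = 1 / 2)
    (σ : Fin n → Bool) : μ {ω | ∀ t, ε t ω = (σ t).toSign} = 2⁻¹ ^ n := by
  have hcyl : {ω | ∀ t, ε t ω = (σ t).toSign} = ⋂ t ∈ univ, ε t ⁻¹' {(σ t).toSign} := by
    ext; simp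
  have hfactor : ∀ t, μ (ε t ⁻¹' {(σ t).toSign}) = 2⁻¹ := by
    intro t
    change μ {ω | ε t ω = (σ t).toSign} = 2⁻¹
    cases σ t
    · simpa [Bool.toSign] using (hlaw t).2
    · simpa [Bool.toSign] using (hlaw t).1
  rw [hcyl, hindep.measure_inter_preimage_eq_mul _ fun _ _ => measurableSet_singleton _]
  simp [hfactor]

theorem measure_le_card_mul_of_forall_eq_toSign [IsProbabilityMeasure μ]
    (hmeas : ∀ t, Measurable (ε t)) (hindep : iIndepFun ε μ)
    (hlaw : ∀ t, μ {ω | ε t ω = 1} = 1 / 2 ∧ μ {ω | ε t ω = -1} = 1 / 2)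
    (B : Finset (Fin n → Bool)) {E : Set Ω}
    (hE : ∀ ω ∈ E, ∀ σ : Fin n → Bool, (∀ t, ε t ω = (σ t).toSign) → σ ∈ B) :
    μ E ≤ #B * 2⁻¹ ^ n := by
  have hsigns : ∀ᵐ ω ∂μ, ∃ σ : Fin n → Bool, ∀ t, ε t ω = (σ t).toSign := by
    filter_upwards [ae_all_iff.mpr fun t => ae_eq_one_or_eq_neg_one (hmeas t) (hlaw t)]
      with ω hω
    have hsign : ∀ t, ∃ b : Bool, ε t ω = b.toSign := fun t =>
      (hω t).elim (fun h => ⟨true, h⟩) fun h => ⟨false, h⟩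
    exact Classical.skolem.mp hsign
  have hcover : E ≤ᵐ[μ] ⋃ σ ∈ B, {ω | ∀ t, ε t ω = (σ t).toSign} := by
    filter_upwards [hsigns] with ω ⟨σ, hσ⟩ hω
    exact Set.mem_biUnion (hE ω hω σ hσ) hσ
  calc μ E ≤ ∑ σ ∈ B, μ {ω | ∀ t, ε t ω = (σ t).toSign} :=
        (measure_mono_ae hcover).trans (measure_biUnion_finset_le _ _)
    _ = #B * 2⁻¹ ^ n := by simp [measure_forall_eq_toSign hindep hlaw]

end Rademacher

section Chernoff

variable {H : Type*} [NormedAddCommGroup H] [NormedSpace ℝ H] {D : ℝ} {n : ℕ}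
  {w : (Fin n → Bool) → Fin n → H} {τ : ℝ}

theorem card_le_norm_sum_toSign_smul_mul_exp_le
    (hsmooth : ∀ x y : H, ‖x + y‖ ^ 2 + ‖x - y‖ ^ 2 ≤ 2 * ‖x‖ ^ 2 + 2 * D ^ 2 * ‖y‖ ^ 2)
    (hw : IsPredictableTree w) (hw₁ : ∀ σ t, ‖w σ t‖ ≤ 1) (hτ : 0 ≤ τ) (l : ℝ) :
    #{σ | τ ≤ ‖∑ t, (σ t).toSign • w σ t‖} * exp (l * τ) ≤ 2 * (2 * exp (l ^ 2 * D ^ 2)) ^ n := by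
  set S : (Fin n → Bool) → H := fun σ => ∑ t, (σ t).toSign • w σ t
  have htree : ∑ σ, cosh (l * ‖S σ‖) ≤ (2 * exp (l ^ 2 * D ^ 2)) ^ n := by
    simpa using sum_apply_sum_toSign_smul_le (Y := Metric.closedBall 0 1)
      (Φ := fun x => cosh (l * ‖x‖)) (exp_pos _).le
      (fun x y hy => cosh_mul_norm_add_add_cosh_mul_norm_sub_le hsmooth l x
        (mem_closedBall_zero_iff.mp hy))
      w hw fun σ t => mem_closedBall_zero_iff.mpr (hw₁ σ t)
  have hmarkov : #{σ | τ ≤ ‖S σ‖} * cosh (l * τ) ≤ ∑ σ, cosh (l * ‖S σ‖) := by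
    calc #{σ | τ ≤ ‖S σ‖} * cosh (l * τ) ≤ ∑ σ with τ ≤ ‖S σ‖, cosh (l * ‖S σ‖) := by
          rw [← nsmul_eq_mul]
          refine card_nsmul_le_sum _ _ _ fun σ hσ => cosh_le_cosh.mpr ?_
          rw [abs_mul, abs_mul, abs_of_nonneg hτ, abs_norm]
          gcongr
          exact (mem_filter.mp hσ).2
      _ ≤ ∑ σ, cosh (l * ‖S σ‖) :=
          sum_le_sum_of_subset_of_nonneg (subset_univ _) fun σ _ _ => (cosh_pos _).le
  have hexp : exp (l * τ) ≤ 2 * cosh (l * τ) := by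
    rw [cosh_eq]; linarith [exp_pos (-(l * τ))]
  calc #{σ | τ ≤ ‖S σ‖} * exp (l * τ) ≤ #{σ | τ ≤ ‖S σ‖} * (2 * cosh (l * τ)) := by gcongr
    _ ≤ 2 * (2 * exp (l ^ 2 * D ^ 2)) ^ n := by linarith

theorem card_le_norm_sum_toSign_smul_mul_le
    (hsmooth : ∀ x y : H, ‖x + y‖ ^ 2 + ‖x - y‖ ^ 2 ≤ 2 * ‖x‖ ^ 2 + 2 * D ^ 2 * ‖y‖ ^ 2)
    (hw : IsPredictableTree w) (hw₁ : ∀ σ t, ‖w σ t‖ ≤ 1) (hτ : 0 ≤ τ) :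
    #{σ | τ ≤ ‖∑ t, (σ t).toSign • w σ t‖} * (2⁻¹ : ℝ) ^ n
      ≤ 2 * exp (-τ ^ 2 / (4 * (D ^ 2 * n))) := by
  set N : ℝ := ((#{σ | τ ≤ ‖∑ t, (σ t).toSign • w σ t‖} : ℕ) : ℝ)
  set q : ℝ := D ^ 2 * n
  -- `l` minimises the Chernoff exponent `q * l ^ 2 - l * τ`
  set l : ℝ := τ / (2 * q)
  have hexponent : q * l ^ 2 - l * τ = -τ ^ 2 / (4 * q) := by
    rcases eq_or_ne q 0 with hq | hq
    · simp [l, hq]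
    · simp only [l]; field_simp; ring
  calc N * 2⁻¹ ^ n = N * exp (l * τ) * 2⁻¹ ^ n * exp (-(l * τ)) := by
        rw [exp_neg]; field_simp
    _ ≤ 2 * (2 * exp (l ^ 2 * D ^ 2)) ^ n * 2⁻¹ ^ n * exp (-(l * τ)) := by
        gcongr ?_ * _ * _
        exact card_le_norm_sum_toSign_smul_mul_exp_le hsmooth hw hw₁ hτ l
    _ = 2 * (exp (l ^ 2 * D ^ 2) ^ n * exp (-(l * τ))) := by
        rw [mul_pow, inv_pow]; field_simp
    _ = 2 * exp (q * l ^ 2 - l * τ) := by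
        rw [← exp_nat_mul, ← exp_add]; simp only [q]; ring_nf
    _ = 2 * exp (-τ ^ 2 / (4 * q)) := by rw [hexponent]

end Chernoff

theorem stmt16_general {Ω H : Type*} [MeasurableSpace Ω] (μ : Measure Ω) [IsProbabilityMeasure μ]
    [NormedAddCommGroup H] [NormedSpace ℝ H]
    (D : ℝ)
    (hsmooth : ∀ x y : H, ‖x + y‖ ^ 2 + ‖x - y‖ ^ 2 ≤ 2 * ‖x‖ ^ 2 + 2 * D ^ 2 * ‖y‖ ^ 2)
    (n : ℕ) (ε : Fin n → Ω → ℝ) (hmeas : ∀ t, Measurable (ε t))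
    (hindep : iIndepFun ε μ)
    (hlaw : ∀ t, μ {ω | ε t ω = 1} = 1 / 2 ∧ μ {ω | ε t ω = -1} = 1 / 2)
    (z : Fin n → Ω → H) (hz : ∀ t ω, ‖z t ω‖ ≤ 1)
    (hpred : ∀ t : Fin n, ∀ ω ω' : Ω, (∀ s : Fin n, s < t → ε s ω = ε s ω') →
      z t ω = z t ω')
    (τ : ℝ) (hτ : 0 < τ) :
    μ {ω | ‖∑ t, ε t ω • z t ω‖ ≥ τ}
      ≤ ENNReal.ofReal (2 * exp (-(τ ^ 2) / (8 * D ^ 2 * n))) := by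
  obtain ⟨w, hw, hw₁, hwz⟩ := exists_isPredictableTree_apply_eq ε z hpred
    (Y := Metric.closedBall 0 1) ⟨0, by simp⟩ fun t ω => mem_closedBall_zero_iff.mpr (hz t ω)
  set B := ({σ | τ ≤ ‖∑ t, (σ t).toSign • w (Bool.toSign ∘ σ) t‖} : Finset (Fin n → Bool))
  have hE : ∀ ω ∈ {ω | ‖∑ t, ε t ω • z t ω‖ ≥ τ}, ∀ σ : Fin n → Bool,
      (∀ t, ε t ω = (σ t).toSign) → σ ∈ B := by
    intro ω hω σ hσ
    have hpath : (fun s => ε s ω) = Bool.toSign ∘ σ := funext hσ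
    simpa [B, ← hσ, ← hpath, hwz] using hω
  have hcount := card_le_norm_sum_toSign_smul_mul_le hsmooth (hw.comp Bool.toSign)
    (fun σ t => mem_closedBall_zero_iff.mp (hw₁ _ t)) hτ.le
  calc μ {ω | ‖∑ t, ε t ω • z t ω‖ ≥ τ} ≤ #B * 2⁻¹ ^ n :=
        measure_le_card_mul_of_forall_eq_toSign hmeas hindep hlaw B hE
    _ = ENNReal.ofReal (#B * 2⁻¹ ^ n) := by
        simp [ENNReal.ofReal_mul, ENNReal.ofReal_pow, ENNReal.ofReal_inv_of_pos, ENNReal.inv_pow]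
    _ ≤ ENNReal.ofReal (2 * exp (-(τ ^ 2) / (8 * D ^ 2 * n))) := by
        refine ENNReal.ofReal_le_ofReal (hcount.trans ?_)
        have : τ ^ 2 / (8 * D ^ 2 * n) ≤ τ ^ 2 / (4 * (D ^ 2 * n)) := by
          rw [show τ ^ 2 / (8 * D ^ 2 * n) = τ ^ 2 / (4 * (D ^ 2 * n)) / 2 by ring]
          exact half_le_self (by positivity)
        gcongr 2 * exp ?_
        rw [neg_div, neg_div]
        exact neg_le_neg this

/-- Pinelis-type deviation inequality for a Rademacher-predictable process with values in
the unit ball of a separable (2,D)-smooth Banach space. -/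
theorem stmt16 {Ω H : Type*} [MeasurableSpace Ω] (μ : Measure Ω) [IsProbabilityMeasure μ]
    [NormedAddCommGroup H] [NormedSpace ℝ H] [TopologicalSpace.SeparableSpace H]
    (D : ℝ) (hD : 0 < D)
    (hsmooth : ∀ x y : H, ‖x + y‖ ^ 2 + ‖x - y‖ ^ 2 ≤ 2 * ‖x‖ ^ 2 + 2 * D ^ 2 * ‖y‖ ^ 2)
    (n : ℕ) (ε : Fin n → Ω → ℝ) (hmeas : ∀ t, Measurable (ε t))
    (hindep : iIndepFun ε μ)
    (hlaw : ∀ t, μ {ω | ε t ω = 1} = 1 / 2 ∧ μ {ω | ε t ω = -1} = 1 / 2)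
    (z : Fin n → Ω → H) (hz : ∀ t ω, ‖z t ω‖ ≤ 1)
    (hpred : ∀ t : Fin n, ∀ ω ω' : Ω, (∀ s : Fin n, s < t → ε s ω = ε s ω') →
      z t ω = z t ω')
    (τ : ℝ) (hτ : 0 < τ) (hn : (n : ℝ) > τ / (4 * D ^ 2)) :
    μ {ω | ‖∑ t, ε t ω • z t ω‖ ≥ τ}
      ≤ ENNReal.ofReal (2 * exp (-(τ ^ 2) / (8 * D ^ 2 * n))) :=
  stmt16_general μ D hsmooth n ε hmeas hindep hlaw z hz hpred τ hτ
end
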